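/- Let k₁, k₃ ∈ ℝ and let λ : ℝ → ℝ be twice differentiable with λ'(t) ≠ 0 for all t. Let A, B, C, E, F : ℝ → ℝ be differentiable and let Ã, B̃, C̃, Ẽ, F̃ : ℝ → ℝ be differentiable with, for all t: Ã(λ(t)) = e^{5k₁} A(t)/λ'(t), B̃(λ(t)) = e^{3k₁} B(t)/λ'(t), C̃(λ(t)) = e^{3k₁-k₃} C(t)/λ'(t), Ẽ(λ(t)) = e^{k₁-k₃} E(t)/λ'(t), F̃(λ(t)) = e^{3k₁-k₃} F(t)/λ'(t). Then for every t: A'(t)B(t) − A(t)B'(t) = 0 if and only if Ã'(λ(t))B̃(λ(t)) − Ã(λ(t))B̃'(λ(t)) = 0; A'(t)C(t) − A(t)C'(t) = 0 if and only if Ã'(λ(t))C̃(λ(t)) − Ã(λ(t))C̃'(λ(t)) = 0; A'(t)E(t) − A(t)E'(t) = 0 if and only if Ã'(λ(t))Ẽ(λ(t)) − Ã(λ(t))Ẽ'(λ(t)) = 0; and A'(t)F(t) − A(t)F'(t) = 0 if and only if Ã'(λ(t))F̃(λ(t)) − Ã(λ(t))F̃'(λ(t)) = 0. That is, the equations A_t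 B − A B_t = 0, A_t C − A C_t = 0, A_t E − A E_t = 0, A_t F − A F_t = 0 are invariant equations of the equivalence group of subclass (3). -/

import Mathlib

/-!
Each equation says that the Wronskian-type expression `W(X, Y) = X' Y - X Y'` vanishes. If
`X̃ ∘ λ = c X / λ'` and `Ỹ ∘ λ = d Y / λ'`, then `W(X̃, Ỹ) ∘ λ = c d / λ'³ · W(X, Y)`, and the
factor `c d / λ'³` never vanishes because `c` and `d` are exponentials.
-/

noncomputable def wronskian (X Y : ℝ → ℝ) (t : ℝ) : ℝ :=
  deriv X t * Y t - X t * deriv Y t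

/-- The scale `g` need not be differentiable: differentiating `d (u Y) = c (v X)` instead of
`u` and `v` separately eliminates `g'`. -/
theorem wronskian_of_eq_mul_div {u v X Y g : ℝ → ℝ} {c d t : ℝ}
    (hu : ∀ s, u s = c * X s / g s) (hv : ∀ s, v s = d * Y s / g s)
    (hud : DifferentiableAt ℝ u t) (hvd : DifferentiableAt ℝ v t)
    (hX : DifferentiableAt ℝ X t) (hY : DifferentiableAt ℝ Y t) :
    wronskian u v t = c * d / g t ^ 2 * wronskian X Y t := by
  have hprod : (fun s => d * (u s * Y s)) = fun s => c * (v s * X s) :=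
    funext fun s => by rw [hu, hv]; ring
  have hderiv : d * (deriv u t * Y t + u t * deriv Y t) =
      c * (deriv v t * X t + v t * deriv X t) :=
    ((hud.hasDerivAt.mul hY.hasDerivAt).const_mul d).unique
      (hprod ▸ (hvd.hasDerivAt.mul hX.hasDerivAt).const_mul c)
  unfold wronskian
  rw [hu t, hv t] at *
  linear_combination (g t)⁻¹ * hderiv

theorem wronskian_comp {X Y lam : ℝ → ℝ} {t : ℝ}
    (hX : DifferentiableAt ℝ X (lam t)) (hY : DifferentiableAt ℝ Y (lam t))
    (hlam : DifferentiableAt ℝ lam t) :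
    wronskian (X ∘ lam) (Y ∘ lam) t = deriv lam t * wronskian X Y (lam t) := by
  simp only [wronskian, deriv_comp t hX hlam, deriv_comp t hY hlam, Function.comp_apply]
  ring

theorem wronskian_transform {X Y Xt Yt lam : ℝ → ℝ} {c d t : ℝ} (hlam : deriv lam t ≠ 0)
    (hX : DifferentiableAt ℝ X t) (hY : DifferentiableAt ℝ Y t)
    (hXt : DifferentiableAt ℝ Xt (lam t)) (hYt : DifferentiableAt ℝ Yt (lam t))
    (hXtr : ∀ s, Xt (lam s) = c * X s / deriv lam s)
    (hYtr : ∀ s, Yt (lam s) = d * Y s / deriv lam s) :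
    wronskian Xt Yt (lam t) = c * d / deriv lam t ^ 3 * wronskian X Y t := by
  have hlamd := differentiableAt_of_deriv_ne_zero hlam
  have h := (wronskian_comp hXt hYt hlamd).symm.trans <|
    wronskian_of_eq_mul_div (u := Xt ∘ lam) (v := Yt ∘ lam) hXtr hYtr
      (hXt.comp t hlamd) (hYt.comp t hlamd) hX hY
  field_simp at h ⊢
  linear_combination h

theorem wronskian_eq_zero_iff_of_transform {X Y Xt Yt lam : ℝ → ℝ} {c d t : ℝ}
    (hc : c ≠ 0) (hd : d ≠ 0) (hlam : deriv lam t ≠ 0)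
    (hX : DifferentiableAt ℝ X t) (hY : DifferentiableAt ℝ Y t)
    (hXt : DifferentiableAt ℝ Xt (lam t)) (hYt : DifferentiableAt ℝ Yt (lam t))
    (hXtr : ∀ s, Xt (lam s) = c * X s / deriv lam s)
    (hYtr : ∀ s, Yt (lam s) = d * Y s / deriv lam s) :
    wronskian X Y t = 0 ↔ wronskian Xt Yt (lam t) = 0 := by
  rw [wronskian_transform hlam hX hY hXt hYt hXtr hYtr,
    mul_eq_zero_iff_left (div_ne_zero (mul_ne_zero hc hd) (pow_ne_zero 3 hlam))]

theorem invariant_equations_general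
    (k₁ k₃ : ℝ)
    (lam : ℝ → ℝ) (hlam' : ∀ t, deriv lam t ≠ 0)
    (A B C E F : ℝ → ℝ) (hA : Differentiable ℝ A) (hB : Differentiable ℝ B)
    (hC : Differentiable ℝ C) (hE : Differentiable ℝ E) (hF : Differentiable ℝ F)
    (At Bt Ct Et Ft : ℝ → ℝ) (hAt : Differentiable ℝ At) (hBt : Differentiable ℝ Bt)
    (hCt : Differentiable ℝ Ct) (hEt : Differentiable ℝ Et) (hFt : Differentiable ℝ Ft)
    (hAtr : ∀ t, At (lam t) = Real.exp (5 * k₁) * A t / deriv lam t)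
    (hBtr : ∀ t, Bt (lam t) = Real.exp (3 * k₁) * B t / deriv lam t)
    (hCtr : ∀ t, Ct (lam t) = Real.exp (3 * k₁ - k₃) * C t / deriv lam t)
    (hEtr : ∀ t, Et (lam t) = Real.exp (k₁ - k₃) * E t / deriv lam t)
    (hFtr : ∀ t, Ft (lam t) = Real.exp (3 * k₁ - k₃) * F t / deriv lam t) :
    ∀ t,
      (deriv A t * B t - A t * deriv B t = 0
        ↔ deriv At (lam t) * Bt (lam t) - At (lam t) * deriv Bt (lam t) = 0)
      ∧ (deriv A t * C t - A t * deriv C t = 0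
        ↔ deriv At (lam t) * Ct (lam t) - At (lam t) * deriv Ct (lam t) = 0)
      ∧ (deriv A t * E t - A t * deriv E t = 0
        ↔ deriv At (lam t) * Et (lam t) - At (lam t) * deriv Et (lam t) = 0)
      ∧ (deriv A t * F t - A t * deriv F t = 0
        ↔ deriv At (lam t) * Ft (lam t) - At (lam t) * deriv Ft (lam t) = 0) := by
  intro t
  have paired (a : ℝ) (Y Yt : ℝ → ℝ) (hY : Differentiable ℝ Y) (hYt : Differentiable ℝ Yt)
      (hYtr : ∀ s, Yt (lam s) = Real.exp a * Y s / deriv lam s) :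
      wronskian A Y t = 0 ↔ wronskian At Yt (lam t) = 0 :=
    wronskian_eq_zero_iff_of_transform (Real.exp_ne_zero _) (Real.exp_ne_zero a) (hlam' t)
      (hA t) (hY t) (hAt _) (hYt _) hAtr hYtr
  exact ⟨paired _ B Bt hB hBt hBtr, paired _ C Ct hC hCt hCtr,
    paired _ E Et hE hEt hEtr, paired _ F Ft hF hFt hFtr⟩

/-- The equations `A_t B − A B_t = 0`, `A_t C − A C_t = 0`, `A_t E − A E_t = 0`,
`A_t F − A F_t = 0` are invariant equations of the equivalence group of the
undamped fifth-order KdV subclass (3). -/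
theorem invariant_equations
    (k₁ k₃ : ℝ)
    (lam : ℝ → ℝ) (hlam : Differentiable ℝ lam)
    (hlam2 : Differentiable ℝ (deriv lam)) (hlam' : ∀ t, deriv lam t ≠ 0)
    (A B C E F : ℝ → ℝ) (hA : Differentiable ℝ A) (hB : Differentiable ℝ B)
    (hC : Differentiable ℝ C) (hE : Differentiable ℝ E) (hF : Differentiable ℝ F)
    (At Bt Ct Et Ft : ℝ → ℝ) (hAt : Differentiable ℝ At) (hBt : Differentiable ℝ Bt)
    (hCt : Differentiable ℝ Ct) (hEt : Differentiable ℝ Et) (hFt : Differentiable ℝ Ft)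
    (hAtr : ∀ t, At (lam t) = Real.exp (5 * k₁) * A t / deriv lam t)
    (hBtr : ∀ t, Bt (lam t) = Real.exp (3 * k₁) * B t / deriv lam t)
    (hCtr : ∀ t, Ct (lam t) = Real.exp (3 * k₁ - k₃) * C t / deriv lam t)
    (hEtr : ∀ t, Et (lam t) = Real.exp (k₁ - k₃) * E t / deriv lam t)
    (hFtr : ∀ t, Ft (lam t) = Real.exp (3 * k₁ - k₃) * F t / deriv lam t) :
    ∀ t,
      (deriv A t * B t - A t * deriv B t = 0
        ↔ deriv At (lam t) * Bt (lam t) - At (lam t) * deriv Bt (lam t) = 0)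
      ∧ (deriv A t * C t - A t * deriv C t = 0
        ↔ deriv At (lam t) * Ct (lam t) - At (lam t) * deriv Ct (lam t) = 0)
      ∧ (deriv A t * E t - A t * deriv E t = 0
        ↔ deriv At (lam t) * Et (lam t) - At (lam t) * deriv Et (lam t) = 0)
      ∧ (deriv A t * F t - A t * deriv F t = 0
        ↔ deriv At (lam t) * Ft (lam t) - At (lam t) * deriv Ft (lam t) = 0) :=
  invariant_equations_general k₁ k₃ lam hlam' A B C E F hA hB hC hE hF At Bt Ct Et Ft hAt hBt hCt
    hEt hFt hAtr hBtr hCtr hEtr hFtr
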